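/- Let G be a graph containing a 4-cycle v1v2v3v4 with two adjacent 4-vertices, deg_G(v1) = deg_G(v2) = 4. Then the subgraph induced by {v1,v2,v3,v4} is ({house},5)-boundary-reducible with boundary {v3,v4}. -/

import Mathlib

open Finset

/-- A proper coloring of `G` from the lists `L`. -/
def IsProperListColoring {V : Type} (G : SimpleGraph V) (L : V → Finset ℕ) (φ : V → ℕ) : Prop :=
  (∀ v, φ v ∈ L v) ∧ ∀ ⦃u v : V⦄, G.Adj u v → φ u ≠ φ v

/-- `G` is weighted `ε`-flexible for lists of size `k`. -/
def WeightedFlexible {V : Type} [Fintype V] (G : SimpleGraph V) (k : ℕ) (ε : ℝ) : Prop :=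
  ∀ L : V → Finset ℕ, (∀ v, k ≤ (L v).card) →
    ∀ w : V → ℕ → ℝ, (∀ v c, 0 ≤ w v c) → (∀ v c, c ∉ L v → w v c = 0) →
      ∃ φ : V → ℕ, IsProperListColoring G L φ ∧
        ε * (∑ v, ∑ c ∈ L v, w v c) ≤ ∑ v, w v (φ v)

/-- `G` is weakly `ε`-flexible for lists of size `k`. -/
def WeaklyFlexible {V : Type} [Fintype V] (G : SimpleGraph V) (k : ℕ) (ε : ℝ) : Prop :=
  ∀ L : V → Finset ℕ, (∀ v, k ≤ (L v).card) →
    ∀ r : V → ℕ, (∀ v, r v ∈ L v) →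
      ∃ φ : V → ℕ, IsProperListColoring G L φ ∧
        ε * (Fintype.card V : ℝ) ≤ ((Finset.univ.filter fun v => φ v = r v).card : ℝ)

/-- `G` has a drawing in the plane: vertices go to distinct points, edges to simple
continuous arcs joining their endpoints, arcs internally avoid vertices and each other. -/
def HasPlanarEmbedding {V : Type} (G : SimpleGraph V) : Prop :=
  ∃ (pos : V → ℝ × ℝ) (γ : Sym2 V → ℝ → ℝ × ℝ),
    Function.Injective pos ∧
    (∀ e ∈ G.edgeSet, ContinuousOn (γ e) (Set.Icc 0 1)) ∧
    (∀ e ∈ G.edgeSet, Set.InjOn (γ e) (Set.Icc 0 1)) ∧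
    (∀ u v : V, G.Adj u v → ({γ s(u, v) 0, γ s(u, v) 1} : Set (ℝ × ℝ)) = {pos u, pos v}) ∧
    (∀ e ∈ G.edgeSet, ∀ t ∈ Set.Ioo (0 : ℝ) 1, γ e t ∉ Set.range pos) ∧
    (∀ e ∈ G.edgeSet, ∀ f ∈ G.edgeSet, e ≠ f →
      ∀ s ∈ Set.Ioo (0 : ℝ) 1, ∀ t ∈ Set.Ioo (0 : ℝ) 1, γ e s ≠ γ f t)

/-- `G` contains a copy of the graph `p.2` as a (not necessarily induced) subgraph. -/
def ContainsCopy {V : Type} (G : SimpleGraph V) (p : (W : Type) × SimpleGraph W) : Prop :=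
  ∃ f : p.2 →g G, Function.Injective f

/-- `K₄` minus an edge (the diamond). -/
def diamondGraph : SimpleGraph (Fin 4) :=
  SimpleGraph.fromEdgeSet {s(0, 1), s(0, 2), s(0, 3), s(1, 2), s(1, 3)}

/-- The house: a `3`-cycle `0 1 4` and a `4`-cycle `0 1 2 3` sharing the edge `01`. -/
def houseGraph : SimpleGraph (Fin 5) :=
  SimpleGraph.fromEdgeSet {s(0, 1), s(1, 2), s(2, 3), s(3, 0), s(0, 4), s(1, 4)}

/-- Two triangles sharing exactly one vertex. -/
def bowtieGraph : SimpleGraph (Fin 5) :=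
  SimpleGraph.fromEdgeSet {s(0, 1), s(1, 2), s(0, 2), s(0, 3), s(3, 4), s(0, 4)}

/-- Two disjoint triangles joined by an edge. -/
def twoTrianglesEdgeGraph : SimpleGraph (Fin 6) :=
  SimpleGraph.fromEdgeSet {s(0, 1), s(1, 2), s(0, 2), s(3, 4), s(4, 5), s(3, 5), s(0, 3)}

def IsTriangle {V : Type} (G : SimpleGraph V) (a b c : V) : Prop :=
  G.Adj a b ∧ G.Adj b c ∧ G.Adj a c

/-- Any two distinct `3`-cycles of `G` are at distance at least `2`. -/
def TrianglesFarApart {V : Type} (G : SimpleGraph V) : Prop :=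
  ∀ a b c a' b' c' : V, IsTriangle G a b c → IsTriangle G a' b' c' →
    ({a, b, c} : Set V) ≠ ({a', b', c'} : Set V) →
    ∀ x ∈ ({a, b, c} : Set V), ∀ y ∈ ({a', b', c'} : Set V), x ≠ y ∧ ¬ G.Adj x y

/-- Every nonempty (induced) subgraph of `G` has a vertex of degree at most `d`. -/
def Degenerate {V : Type} (G : SimpleGraph V) [DecidableRel G.Adj] (d : ℕ) : Prop :=
  ∀ S : Finset V, S.Nonempty → ∃ v ∈ S, (S.filter fun w => G.Adj v w).card ≤ d

/-- The degree of `v` into the set `A`. -/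
def degIn {V : Type} (G : SimpleGraph V) [DecidableRel G.Adj] (A : Finset V) (v : V) : ℕ :=
  (A.filter fun w => G.Adj v w).card

/-- The graph induced by `G` on `T` is colorable from every list assignment
with list sizes at least `f`. -/
def ColorableOn {V : Type} (G : SimpleGraph V) (T : Finset V) (f : V → ℤ) : Prop :=
  ∀ L : V → Finset ℕ, (∀ v ∈ T, f v ≤ ((L v).card : ℤ)) →
    ∃ φ : V → ℕ, (∀ v ∈ T, φ v ∈ L v) ∧ ∀ u ∈ T, ∀ v ∈ T, G.Adj u v → φ u ≠ φ v

/-- The subgraph of `G` induced on `S`, together with one additional vertex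
adjacent exactly to the vertices of `I`. -/
def apexGraph {V : Type} (G : SimpleGraph V) (S I : Finset V) :
    SimpleGraph ({x // x ∈ S} ⊕ Unit) where
  Adj x y :=
    match x, y with
    | Sum.inl a, Sum.inl b => G.Adj a.1 b.1
    | Sum.inl a, Sum.inr _ => a.1 ∈ I
    | Sum.inr _, Sum.inl b => b.1 ∈ I
    | Sum.inr _, Sum.inr _ => False
  symm := by
    constructor
    rintro (a | a) (b | b) h
    · exact G.adj_symm h
    · exact h
    · exact h
    · exact h
  loopless := by
    constructor
    rintro (a | a) h
    · exact G.irrefl h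
    · exact h

/-- `I ⊆ S` is `F`-forbidding (for the subgraph of `G` induced on `S`):
the induced subgraph plus an apex over `I` contains no member of `F` as a subgraph. -/
def Forbidding {V : Type} (F : Set ((W : Type) × SimpleGraph W)) (G : SimpleGraph V)
    (S I : Finset V) : Prop :=
  ∀ p ∈ F, ¬ ContainsCopy (apexGraph G S I) p

/-- The subgraph of `G` induced on `S` is `(F,k)`-boundary-reducible with boundary `B`,
inside the ambient induced subgraph of `G` on `A` (degrees `deg_G` are measured in `A`). -/
def BoundaryReducibleIn {V : Type} [DecidableEq V] (F : Set ((W : Type) × SimpleGraph W))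
    (k : ℕ) (G : SimpleGraph V) [DecidableRel G.Adj] (A S B : Finset V) : Prop :=
  S ⊆ A ∧ B ⊂ S ∧
  (∀ v ∈ S \ B, ColorableOn G (S \ B)
      (Function.update (fun w => (k : ℤ) - degIn G A w + degIn G (S \ B) w) v 1)) ∧
  (∀ I : Finset V, I ⊆ S \ B → (I.card : ℤ) ≤ (k : ℤ) - 2 → Forbidding F G S I →
    ColorableOn G (S \ B)
      (fun w => (k : ℤ) - degIn G A w + degIn G (S \ B) w - if w ∈ I then 1 else 0))

/-- Weak `(F,k)`-boundary-reducibility, witnessed by the set `Fx = Fix(H)`. -/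
def WeakBoundaryReducibleInWith {V : Type} [DecidableEq V]
    (F : Set ((W : Type) × SimpleGraph W)) (k : ℕ) (G : SimpleGraph V) [DecidableRel G.Adj]
    (A S B Fx : Finset V) : Prop :=
  S ⊆ A ∧ B ⊂ S ∧ Fx.Nonempty ∧ Fx ⊆ S \ B ∧
  (∀ v ∈ Fx, ColorableOn G (S \ B)
      (Function.update (fun w => (k : ℤ) - degIn G A w + degIn G (S \ B) w) v 1)) ∧
  (∀ I : Finset V, I ⊆ S \ B → (I.card : ℤ) ≤ (k : ℤ) - 2 → Forbidding F G S I →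
    ColorableOn G (S \ B)
      (fun w => (k : ℤ) - degIn G A w + degIn G (S \ B) w - if w ∈ I then 1 else 0))

/-- An `(F,k,b)`-resolution of `G`: nested induced subgraphs `G_i` of `G` on the vertex
sets `A i`, where `G_i` is obtained from `G_{i-1}` by deleting `H_i - B_i` for an induced
`(F,k)`-boundary-reducible subgraph `H_i` (on vertex set `S i`) of `G_{i-1}`,
and the last graph `G_M` is itself reducible with empty boundary and has at most `b` vertices. -/
structure Resolution {V : Type} [Fintype V] [DecidableEq V]
    (F : Set ((W : Type) × SimpleGraph W)) (k b : ℕ)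
    (G : SimpleGraph V) [DecidableRel G.Adj] where
  M : ℕ
  S : ℕ → Finset V
  B : ℕ → Finset V
  A : ℕ → Finset V
  hA0 : A 0 = Finset.univ
  hAstep : ∀ i, 1 ≤ i → i ≤ M → A i = A (i - 1) \ (S i \ B i)
  avoid : ∀ p ∈ F, ¬ ContainsCopy G p
  red : ∀ i, 1 ≤ i → i ≤ M → BoundaryReducibleIn F k G (A (i - 1)) (S i) (B i)
  size : ∀ i, 1 ≤ i → i ≤ M → (S i \ B i).card ≤ b
  last : BoundaryReducibleIn F k G (A M) (A M) ∅
  lastsize : (A M).card ≤ b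

/-- A weak `(F,k,b)`-resolution of `G`; `Fx i` is the set `Fix(H_i)` for the `i`-th
reducible subgraph (`1 ≤ i ≤ M`), and `Fx 0` is the `Fix` set of the last graph `G_M`. -/
structure WeakResolution {V : Type} [Fintype V] [DecidableEq V]
    (F : Set ((W : Type) × SimpleGraph W)) (k b : ℕ)
    (G : SimpleGraph V) [DecidableRel G.Adj] where
  M : ℕ
  S : ℕ → Finset V
  B : ℕ → Finset V
  A : ℕ → Finset V
  Fx : ℕ → Finset V
  hA0 : A 0 = Finset.univ
  hAstep : ∀ i, 1 ≤ i → i ≤ M → A i = A (i - 1) \ (S i \ B i)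
  avoid : ∀ p ∈ F, ¬ ContainsCopy G p
  red : ∀ i, 1 ≤ i → i ≤ M → WeakBoundaryReducibleInWith F k G (A (i - 1)) (S i) (B i) (Fx i)
  size : ∀ i, 1 ≤ i → i ≤ M → (S i \ B i).card ≤ b
  last : WeakBoundaryReducibleInWith F k G (A M) (A M) ∅ (Fx 0)
  lastsize : (A M).card ≤ b

/-- `Fix(G)`: the union of the `Fix` sets of the reducible subgraphs of the resolution. -/
def WeakResolution.FixG {V : Type} [Fintype V] [DecidableEq V]
    {F : Set ((W : Type) × SimpleGraph W)} {k b : ℕ}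
    {G : SimpleGraph V} [DecidableRel G.Adj] (R : WeakResolution F k b G) : Finset V :=
  (Finset.range (R.M + 1)).biUnion R.Fx

/-!
Removing the boundary leaves the single edge `v1 v2`, and each endpoint keeps a list of size
`5 - 4 + 1 = 2`. An edge is list colorable as soon as one endpoint has a color and the other two,
which settles (FIX) and every case of (FORB) except `I = {v1, v2}`; that set is not forbidding,
because an apex over `v1` and `v2` closes the 4-cycle into a house.
-/

lemma colorableOn_pair {V : Type} [DecidableEq V] (G : SimpleGraph V) {u v : V} (huv : u ≠ v)
    {f : V → ℤ} (hu : 1 ≤ f u) (hv : 1 ≤ f v) (hsum : 3 ≤ f u + f v) :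
    ColorableOn G {u, v} f := by
  wlog hv2 : 2 ≤ f v generalizing u v
  · rw [pair_comm]
    exact this huv.symm hv hu (by omega) (by omega)
  intro L hL
  obtain ⟨a, ha⟩ : (L u).Nonempty := card_pos.mp (by have := hL u (by simp); omega)
  obtain ⟨b, hb, hba⟩ := exists_mem_ne (show 1 < (L v).card by have := hL v (by simp); omega) a
  refine ⟨Function.update (fun _ => a) v b, ?_, ?_⟩
  · simp [huv, ha, hb]
  · simp only [mem_insert, mem_singleton]
    rintro x (rfl | rfl) y (rfl | rfl) hxy <;> simp_all [Function.update, eq_comm]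

lemma degIn_univ {V : Type} [Fintype V] (G : SimpleGraph V) [DecidableRel G.Adj] (v : V) :
    degIn G univ v = G.degree v := by
  rw [degIn, ← SimpleGraph.neighborFinset_eq_filter, SimpleGraph.card_neighborFinset_eq_degree]

lemma degIn_pair_of_adj {V : Type} [DecidableEq V] {G : SimpleGraph V} [DecidableRel G.Adj]
    {u v : V} (h : G.Adj u v) : degIn G {u, v} u = 1 := by
  rw [degIn, card_eq_one]
  exact ⟨v, by ext w; simp only [mem_filter, mem_insert, mem_singleton]; aesop⟩

lemma containsCopy_house_apexGraph {V : Type} {G : SimpleGraph V} {S I : Finset V}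
    {v1 v2 v3 v4 : V} (h12 : G.Adj v1 v2) (h23 : G.Adj v2 v3) (h34 : G.Adj v3 v4)
    (h41 : G.Adj v4 v1) (h13 : v1 ≠ v3) (h24 : v2 ≠ v4)
    (hS1 : v1 ∈ S) (hS2 : v2 ∈ S) (hS3 : v3 ∈ S) (hS4 : v4 ∈ S) (hI1 : v1 ∈ I) (hI2 : v2 ∈ I) :
    ContainsCopy (apexGraph G S I) ⟨Fin 5, houseGraph⟩ := by
  have := h12.ne; have := h23.ne; have := h34.ne; have := h41.ne
  let emb : Fin 5 → {x // x ∈ S} ⊕ Unit :=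
    ![.inl ⟨v1, hS1⟩, .inl ⟨v2, hS2⟩, .inl ⟨v3, hS3⟩, .inl ⟨v4, hS4⟩, .inr ()]
  refine ⟨⟨emb, fun {a b} hab => ?_⟩, fun a b hab => ?_⟩
  · simp only [houseGraph, SimpleGraph.fromEdgeSet_adj] at hab
    fin_cases a <;> fin_cases b <;> simp_all [emb, apexGraph, G.adj_symm]
  · fin_cases a <;> fin_cases b <;> simp_all [emb, eq_comm]

theorem fourCycle_twoAdjacentFour_reducible {V : Type} [Fintype V] [DecidableEq V]
    (G : SimpleGraph V) [DecidableRel G.Adj]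
    (v1 v2 v3 v4 : V)
    (h12 : G.Adj v1 v2) (h23 : G.Adj v2 v3) (h34 : G.Adj v3 v4) (h41 : G.Adj v4 v1)
    (h13 : v1 ≠ v3) (h24 : v2 ≠ v4)
    (hd1 : G.degree v1 = 4) (hd2 : G.degree v2 = 4) :
    BoundaryReducibleIn ({⟨Fin 5, houseGraph⟩} : Set ((W : Type) × SimpleGraph W)) 5 G
      Finset.univ {v1, v2, v3, v4} {v3, v4} := by
  have hH : ({v1, v2, v3, v4} : Finset V) \ {v3, v4} = {v1, v2} := by
    ext x; simp only [mem_sdiff, mem_insert, mem_singleton]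
    grind [h12.ne, h23.ne, h34.ne, h41.ne]
  have hf1 : (5 : ℤ) - degIn G univ v1 + degIn G {v1, v2} v1 = 2 := by
    rw [degIn_univ, hd1, degIn_pair_of_adj h12]; norm_num
  have hf2 : (5 : ℤ) - degIn G univ v2 + degIn G {v1, v2} v2 = 2 := by
    rw [degIn_univ, hd2, pair_comm, degIn_pair_of_adj h12.symm]; norm_num
  refine ⟨subset_univ _, ?_, fun v hv => ?_, fun I _ _ hforb => ?_⟩
  · refine ssubset_of_subset_not_subset ((subset_insert _ _).trans (subset_insert _ _)) ?_
    intro h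
    simpa [h13, h41.ne'] using h (mem_insert_self v1 _)
  · rw [hH, mem_insert, mem_singleton] at hv
    rw [hH]
    apply colorableOn_pair G h12.ne <;> rcases hv with rfl | rfl <;>
      simp [Function.update, h12.ne, h12.ne', hf1, hf2]
  · rw [hH]
    by_cases hI12 : v1 ∈ I ∧ v2 ∈ I
    · exact absurd (containsCopy_house_apexGraph h12 h23 h34 h41 h13 h24 (by simp) (by simp)
        (by simp) (by simp) hI12.1 hI12.2) (hforb _ rfl)
    · apply colorableOn_pair G h12.ne <;> simp only [Nat.cast_ofNat, hf1, hf2] <;> split_ifs <;> grind
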